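/- Let Γ be a finite link-regular simple graph with maximal clique size d. With g_m(n) defined via the geodesic automaton of RACG(Γ) as the number of words of length n accepted from the m-clique states summed over ordered m-cliques (g₀(n) counting words accepted from the empty clique, g_{d+1} ≡ 0), let G_m(z) = Σ_{n≥0} g_m(n) zⁿ ∈ ℤ⟦z⟧. Set a₀ = 1, a_m = ℓ₀⋯ℓ_{m−1} for 1 ≤ m ≤ d, and b_{m,k} = binom(m,k) N_{m,k}. Define polynomials p₁(z) = q₁(z) = 1 and, for 1 ≤ m ≤ d, p_{m+1}(z) = p_m(z) − Σ_{k=0}^{m−1} b_{m,k} z^{m−k} p_{k+1}(z) and q_{m+1}(z) = q_m(z) + a_m z^m − Σ_{k=0}^{m−1} b_{m,k} z^{m−k} q_{k+1}(z). Then for every 1 ≤ m ≤ d + 1, z^m · G_m(z) = p_m(z) · G₀(z) − q_m(z) in ℤ⟦z⟧. -/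

import Mathlib

variable {V : Type*}

/-- The link of a finite set of vertices `σ`: vertices `v ∉ σ` with `σ ∪ {v}` a clique. -/
noncomputable def lk [Fintype V] (G : SimpleGraph V) (σ : Finset V) : Finset V :=
  Set.Finite.toFinset (Set.toFinite {v : V | v ∉ σ ∧ G.IsClique (insert v (σ : Set V))})

/-- Link-regularity of a simple graph: cliques of the same size have links of the same size. -/
def LinkRegularS [Fintype V] (G : SimpleGraph V) : Prop :=
  ∀ σ₁ σ₂ : Finset V, G.IsClique (σ₁ : Set V) → G.IsClique (σ₂ : Set V) →
    σ₁.card = σ₂.card → (lk G σ₁).card = (lk G σ₂).card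

/-- The numbers `N_{m,k}` of the paper, in terms of the link sizes `ℓ`. -/
def Nmk (ℓ : ℕ → ℤ) (m k : ℕ) : ℤ :=
  if k = m then 1
  else if k + 1 = m then ℓ (m - 1) - ℓ m - 1
  else (∏ j ∈ Finset.Ioo k m, ℓ j) *
    ∑ j ∈ Finset.Icc k m, ((m - k).choose (j - k) : ℤ) * (-1) ^ (j - k) * ℓ j

/-- The transition function of the geodesic automaton of a RACG: states are finite sets of
vertices (the reachable ones are the cliques), `none` is the reject state. -/
def racgStep (G : SimpleGraph V) [DecidableEq V] [DecidableRel G.Adj] [Fintype V]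
    (σ : Finset V) (v : V) : Option (Finset V) :=
  if v ∈ σ then none else some (insert v (G.neighborFinset v ∩ σ))

def racgRun (G : SimpleGraph V) [DecidableEq V] [DecidableRel G.Adj] [Fintype V] :
    Finset V → List V → Option (Finset V)
  | σ, [] => some σ
  | σ, v :: w =>
    match racgStep G σ v with
    | none => none
    | some τ => racgRun G τ w

/-- `|L_σ ∩ (VΓ)ⁿ|`: the number of words of length `n` accepted by the geodesic automaton
of `RACG(Γ)` started in state `σ`. -/
noncomputable def aCount (G : SimpleGraph V) [Fintype V] [DecidableEq V] [DecidableRel G.Adj]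
    (σ : Finset V) (n : ℕ) : ℕ :=
  Set.ncard {w : List V | w.length = n ∧ ∃ τ, racgRun G σ w = some τ ∧ G.IsClique (τ : Set V)}

/-- The ordered `m`-cliques of `G`, as injective tuples with clique range. -/
noncomputable def orderedCliques [Fintype V] (G : SimpleGraph V) (m : ℕ) :
    Finset (Fin m → V) :=
  Set.Finite.toFinset (Set.toFinite
    {t : Fin m → V | Function.Injective t ∧ G.IsClique (Set.range t)})

/-- `g_m(n)`: for `m = 0` the number of accepted words of length `n` from the empty clique;
for `m ≥ 1` the sum over ordered `m`-cliques of the number of accepted words of length `n`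
starting at the corresponding state.  (For `m` larger than the maximal clique size there are
no ordered `m`-cliques, so the value is `0`.) -/
noncomputable def gfun (G : SimpleGraph V) [Fintype V] [DecidableEq V] [DecidableRel G.Adj]
    (m n : ℕ) : ℤ :=
  if m = 0 then (aCount G ∅ n : ℤ)
  else ∑ t ∈ orderedCliques G m, (aCount G (Finset.image t Finset.univ) n : ℤ)

/-!
For a clique `σ`, a letter `v ∉ σ` moves the geodesic automaton to the clique
`{v} ∪ (N(v) ∩ σ)` of size `#(N(v) ∩ σ) + 1`, and every other letter is rejected. By
inclusion–exclusion over the subsets of `σ`, link-regularity makes the number of `v ∉ σ` with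
`#(N(v) ∩ σ) = k` an explicit function of `#σ`, `k` and the link sizes `ℓ`, so by induction on the
word length the number of accepted words from `σ` depends only on `#σ`. The layer `k = #σ` is the
link of `σ` and produces the `(m+1)`-cliques; the lower layers, counted over the
`ℓ₀ ⋯ ℓ_{m-1}` ordered `m`-cliques, contribute `b_{m,k} g_{k+1}`. Hence
`G_m = a_m + z (G_{m+1} + Σ_{k<m} b_{m,k} G_{k+1})` and `G₀ = 1 + z G₁`; multiplying by `z^m`
and inducting on `m`, the recursions defining `p_m` and `q_m` record exactly the resulting
coefficients of `G₀` and of `1`.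
-/

open Finset

theorem sum_range_choose_mul_choose_mul (f : ℕ → ℤ) (n k : ℕ) :
    ∑ j ∈ range (n + 1), (n.choose j : ℤ) * ((-1) ^ (j - k) * j.choose k * f j) =
      n.choose k * ∑ i ∈ range (n - k + 1), ((n - k).choose i : ℤ) * (-1) ^ i * f (k + i) := by
  rcases lt_or_ge n k with hnk | hkn
  · rw [Nat.choose_eq_zero_of_lt hnk, Nat.cast_zero, zero_mul]
    refine sum_eq_zero fun j hj => ?_
    rw [Nat.choose_eq_zero_of_lt (show j < k by grind)]
    simp
  obtain ⟨r, rfl⟩ := Nat.exists_eq_add_of_le hkn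
  rw [show k + r + 1 = k + (r + 1) by ring, sum_range_add, Nat.add_sub_cancel_left, mul_sum,
    sum_eq_zero fun j hj => by rw [Nat.choose_eq_zero_of_lt (mem_range.1 hj)]; simp, zero_add]
  refine sum_congr rfl fun i _ => ?_
  have h : ((k + r).choose (k + i) : ℤ) * (k + i).choose k = (k + r).choose k * r.choose i := by
    have := Nat.choose_mul (n := k + r) (Nat.le_add_right k i)
    simp only [Nat.add_sub_cancel_left] at this
    exact_mod_cast this
  rw [Nat.add_sub_cancel_left]
  linear_combination (-1) ^ i * f (k + i) * h

theorem sum_range_choose_mul_choose_alternating (n k : ℕ) :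
    ∑ j ∈ range (n + 1), (n.choose j : ℤ) * ((-1) ^ (j - k) * j.choose k) =
      if n = k then 1 else 0 := by
  have h := sum_range_choose_mul_choose_mul (fun _ => 1) n k
  simp only [mul_one] at h
  simp only [h, mul_comm _ ((-1 : ℤ) ^ _), Int.alternating_sum_range_choose]
  rcases lt_trichotomy n k with h | rfl | h
  · simp [Nat.choose_eq_zero_of_lt h, h.ne]
  · simp
  · simp [h.ne', (Nat.sub_pos_of_lt h).ne']

theorem sum_range_choose_mul_choose_mul_sub (n k : ℕ) :
    ∑ j ∈ range (n + 1), (n.choose j : ℤ) * ((-1) ^ (j - k) * j.choose k * (n - j : ℕ)) =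
      if k + 1 = n then (n : ℤ) else 0 := by
  cases n with
  | zero => simp
  | succ s =>
    have hs (j : ℕ) : ((s + 1).choose j : ℤ) * (s + 1 - j : ℕ) = (s + 1) * s.choose j := by
      exact_mod_cast (Nat.choose_mul_succ_eq s j).symm.trans (mul_comm _ _)
    calc ∑ j ∈ range (s + 1 + 1),
          ((s + 1).choose j : ℤ) * ((-1) ^ (j - k) * j.choose k * (s + 1 - j : ℕ))
        = (s + 1) * ∑ j ∈ range (s + 1 + 1), (s.choose j : ℤ) * ((-1) ^ (j - k) * j.choose k) := by
          rw [mul_sum]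
          refine sum_congr rfl fun j _ => ?_
          linear_combination (-1) ^ (j - k) * (j.choose k : ℤ) * hs j
      _ = if k + 1 = s + 1 then ((s + 1 : ℕ) : ℤ) else 0 := by
          rw [sum_range_succ, Nat.choose_succ_self, Nat.cast_zero, zero_mul, add_zero,
            sum_range_choose_mul_choose_alternating]
          split_ifs <;> omega

theorem sum_powerset_neg_one_pow_mul_choose {α : Type*} (B : Finset α) (k : ℕ) :
    ∑ ρ ∈ B.powerset, (-1 : ℤ) ^ (#ρ - k) * (#ρ).choose k = if #B = k then 1 else 0 := by
  rw [sum_powerset_apply_card (fun j => (-1 : ℤ) ^ (j - k) * j.choose k)]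
  simp only [nsmul_eq_mul]
  exact sum_range_choose_mul_choose_alternating #B k

theorem PowerSeries.mk_eq_C_add_X_mul {R : Type*} [Semiring R] (f : ℕ → R) :
    PowerSeries.mk f =
      PowerSeries.C (f 0) + PowerSeries.X * PowerSeries.mk fun n => f (n + 1) := by
  ext n
  cases n <;> simp [PowerSeries.coeff_succ_X_mul]

theorem pow_mul_eq_of_recurrence {A : Type*} [CommRing A] (x : A) (d : ℕ) (a : ℕ → A)
    (b : ℕ → ℕ → A) (F P Q : ℕ → A) (hF0 : F 0 = 1 + x * F 1)
    (hF : ∀ m, 1 ≤ m → m ≤ d →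
      F m = a m + x * (F (m + 1) + ∑ k ∈ range m, b m k * F (k + 1)))
    (hP1 : P 1 = 1) (hQ1 : Q 1 = 1)
    (hP : ∀ m, 1 ≤ m → m ≤ d →
      P (m + 1) = P m - ∑ k ∈ range m, b m k * x ^ (m - k) * P (k + 1))
    (hQ : ∀ m, 1 ≤ m → m ≤ d →
      Q (m + 1) = Q m + a m * x ^ m - ∑ k ∈ range m, b m k * x ^ (m - k) * Q (k + 1)) :
    ∀ m, 1 ≤ m → m ≤ d + 1 → x ^ m * F m = P m * F 0 - Q m := by
  intro m
  induction m using Nat.strong_induction_on with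
  | _ m ih =>
    intro hm hmd
    obtain ⟨m, rfl⟩ := Nat.exists_eq_add_of_le' hm
    rcases Nat.eq_zero_or_pos m with rfl | hm
    · rw [hP1, hQ1, hF0]
      ring
    have hsum : x ^ m * (x * ∑ k ∈ range m, b m k * F (k + 1)) =
        (∑ k ∈ range m, b m k * x ^ (m - k) * P (k + 1)) * F 0 -
          ∑ k ∈ range m, b m k * x ^ (m - k) * Q (k + 1) := by
      rw [mul_sum, mul_sum, sum_mul, ← sum_sub_distrib]
      refine sum_congr rfl fun k hk => ?_
      have hkm := mem_range.1 hk
      rw [← pow_sub_mul_pow x hkm.le]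
      linear_combination b m k * x ^ (m - k) * ih (k + 1) (by omega) (by omega) (by omega)
    rw [hP m hm (by omega), hQ m hm (by omega)]
    linear_combination (-x ^ m) * hF m hm (by omega) + ih m (by omega) hm (by omega) - hsum

section Link

variable [Fintype V] (G : SimpleGraph V)

def HasLinkSizes (ℓ : ℕ → ℤ) : Prop :=
  ∀ σ : Finset V, G.IsClique (σ : Set V) → (#(lk G σ) : ℤ) = ℓ #σ

@[simp]
theorem mem_lk {σ : Finset V} {v : V} :
    v ∈ lk G σ ↔ v ∉ σ ∧ G.IsClique (insert v (σ : Set V)) := by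
  simp [lk]

theorem lk_empty : lk G ∅ = univ := by
  ext v
  simp

theorem hasLinkSizes_of_le {d : ℕ} {ℓ : ℕ → ℤ}
    (hmax : ∀ σ : Finset V, G.IsClique (σ : Set V) → σ.card ≤ d)
    (hℓ0 : ℓ 0 = Fintype.card V)
    (hℓ : ∀ k, 1 ≤ k → k ≤ d → ∀ σ : Finset V, G.IsClique (σ : Set V) → σ.card = k →
      ℓ k = ((lk G σ).card : ℤ)) :
    HasLinkSizes G ℓ := by
  intro σ hσ
  rcases σ.eq_empty_or_nonempty with rfl | hne
  · simp [lk_empty, hℓ0]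
  · exact (hℓ _ hne.card_pos (hmax σ hσ) σ hσ rfl).symm

variable [DecidableRel G.Adj]

theorem mem_lk_iff_subset_neighborFinset {σ : Finset V} (hσ : G.IsClique (σ : Set V))
    {v : V} : v ∈ lk G σ ↔ v ∉ σ ∧ σ ⊆ G.neighborFinset v := by
  rw [mem_lk, SimpleGraph.isClique_insert]
  refine and_congr_right fun hv => ?_
  simp only [hσ, true_and, mem_coe]
  refine forall₂_congr fun u hu => ?_
  simp [show v ≠ u from fun h => hv (h ▸ hu)]

theorem card_filter_subset_neighborFinset_add [DecidableEq V] {σ ρ : Finset V}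
    (hσ : G.IsClique (σ : Set V)) (hρ : ρ ⊆ σ) :
    #{v ∈ σᶜ | ρ ⊆ G.neighborFinset v} + #(σ \ ρ) = #(lk G ρ) := by
  have hρ' : G.IsClique (ρ : Set V) := hσ.subset (by exact_mod_cast hρ)
  have hdisj : Disjoint {v ∈ σᶜ | ρ ⊆ G.neighborFinset v} (σ \ ρ) :=
    disjoint_left.2 fun v hv hv' => (mem_compl.1 (mem_filter.1 hv).1) (mem_sdiff.1 hv').1
  rw [← card_union_of_disjoint hdisj]
  congr 1
  ext v
  rw [mem_lk_iff_subset_neighborFinset G hρ']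
  simp only [mem_union, mem_filter, mem_compl, mem_sdiff]
  by_cases hv : v ∈ σ
  · have hadj : ρ ⊆ G.neighborFinset v ↔ v ∉ ρ := ⟨fun h hvρ => by simpa using h hvρ,
      fun hvρ u hu => (G.mem_neighborFinset _ _).2 (hσ hv (hρ hu) fun h => hvρ (h ▸ hu))⟩
    simp [hv, hadj]
  · simp [hv, show v ∉ ρ from fun h => hv (hρ h)]

end Link

section Layer

variable [Fintype V] [DecidableEq V] (G : SimpleGraph V) [DecidableRel G.Adj]

def nbrLayer (σ : Finset V) (k : ℕ) : Finset V :=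
  {v ∈ σᶜ | #(G.neighborFinset v ∩ σ) = k}

-- Inclusion–exclusion over the subsets of an `m`-clique; the last term removes the vertices of
-- the clique itself, each of which is adjacent to the other `m - 1`.
def nbrLayerCard (ℓ : ℕ → ℤ) (m k : ℕ) : ℤ :=
  m.choose k * ∑ i ∈ range (m - k + 1), ((m - k).choose i : ℤ) * (-1) ^ i * ℓ (k + i)
    - if k + 1 = m then (m : ℤ) else 0

theorem prod_mul_nbrLayerCard (ℓ : ℕ → ℤ) {m k : ℕ} (hk : k < m) :
    (∏ j ∈ range m, ℓ j) * nbrLayerCard ℓ m k =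
      m.choose k * Nmk ℓ m k * ∏ j ∈ range (k + 1), ℓ j := by
  rw [nbrLayerCard, Nmk, if_neg hk.ne]
  split_ifs with hkm
  · subst hkm
    simp only [add_tsub_cancel_left, add_tsub_cancel_right, sum_range_succ, sum_range_zero,
      Nat.choose_succ_self_right, Nat.choose_self, add_zero]
    push_cast
    ring
  · rw [← prod_range_mul_prod_Ico _ (Nat.succ_le_of_lt hk), Nat.succ_eq_add_one,
      Ico_add_one_left_eq_Ioo, ← Ico_add_one_right_eq_Icc, sum_Ico_eq_sum_range,
      show m + 1 - k = m - k + 1 by omega]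
    simp only [Nat.add_sub_cancel_left, sub_zero]
    ring

theorem card_nbrLayer {ℓ : ℕ → ℤ} (hℓ : HasLinkSizes G ℓ) {σ : Finset V}
    (hσ : G.IsClique (σ : Set V)) (k : ℕ) :
    (#(nbrLayer G σ k) : ℤ) = nbrLayerCard ℓ #σ k := by
  set w : ℕ → ℤ := fun j => (-1) ^ (j - k) * j.choose k
  have hcount : ∀ ρ ⊆ σ, (#{v ∈ σᶜ | ρ ⊆ G.neighborFinset v} : ℤ) = ℓ #ρ - (#σ - #ρ : ℕ) := by
    intro ρ hρ
    rw [← hℓ ρ (hσ.subset (by exact_mod_cast hρ)),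
      ← card_filter_subset_neighborFinset_add G hσ hρ, card_sdiff_of_subset hρ]
    push_cast
    ring
  calc (#(nbrLayer G σ k) : ℤ)
      = ∑ v ∈ σᶜ, ∑ ρ ∈ (G.neighborFinset v ∩ σ).powerset, w #ρ := by
        rw [nbrLayer, card_filter]
        push_cast
        exact sum_congr rfl fun v _ => (sum_powerset_neg_one_pow_mul_choose _ k).symm
    _ = ∑ ρ ∈ σ.powerset, ∑ v ∈ σᶜ with ρ ⊆ G.neighborFinset v, w #ρ := by
        refine sum_comm' fun v ρ => ?_
        simp only [mem_powerset, subset_inter_iff, mem_filter]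
        tauto
    _ = ∑ ρ ∈ σ.powerset, w #ρ * (ℓ #ρ - (#σ - #ρ : ℕ)) := by
        refine sum_congr rfl fun ρ hρ => ?_
        rw [sum_const, nsmul_eq_mul, hcount ρ (mem_powerset.1 hρ), mul_comm]
    _ = nbrLayerCard ℓ #σ k := by
        rw [sum_powerset_apply_card (fun j => w j * (ℓ j - (#σ - j : ℕ)))]
        simp only [w, nsmul_eq_mul, mul_sub, sum_sub_distrib, ← mul_assoc]
        rw [nbrLayerCard, ← sum_range_choose_mul_choose_mul, ← sum_range_choose_mul_choose_mul_sub]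
        simp only [mul_assoc]

theorem nbrLayer_card_eq_lk {σ : Finset V} (hσ : G.IsClique (σ : Set V)) :
    nbrLayer G σ #σ = lk G σ := by
  ext v
  rw [nbrLayer, mem_filter, mem_compl, mem_lk_iff_subset_neighborFinset G hσ, ← inter_eq_right]
  exact and_congr_right fun _ =>
    ⟨eq_of_subset_of_card_le inter_subset_right ∘ ge_of_eq, congrArg card⟩

end Layer

section Automaton

variable [Fintype V] [DecidableEq V] (G : SimpleGraph V) [DecidableRel G.Adj]

theorem finite_acceptedWords (σ : Finset V) (n : ℕ) :
    {w : List V | w.length = n ∧ ∃ τ, racgRun G σ w = some τ ∧ G.IsClique (τ : Set V)}.Finite :=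
  (List.finite_length_eq V n).subset fun _ hw => hw.1

theorem aCount_zero {σ : Finset V} (hσ : G.IsClique (σ : Set V)) : aCount G σ 0 = 1 := by
  rw [aCount, Set.ncard_eq_one]
  exact ⟨[], Set.ext fun w => by cases w <;> simp [racgRun, hσ]⟩

theorem racgRun_cons (σ : Finset V) (v : V) (w : List V) :
    racgRun G σ (v :: w) =
      if v ∈ σ then none else racgRun G (insert v (G.neighborFinset v ∩ σ)) w := by
  by_cases hv : v ∈ σ <;> simp [racgRun, racgStep, hv]

theorem aCount_succ (σ : Finset V) (n : ℕ) :
    aCount G σ (n + 1) = ∑ v ∈ σᶜ, aCount G (insert v (G.neighborFinset v ∩ σ)) n := by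
  have hwords : (finite_acceptedWords G σ (n + 1)).toFinset = σᶜ.biUnion fun v =>
      (finite_acceptedWords G (insert v (G.neighborFinset v ∩ σ)) n).toFinset.image
        (List.cons v) := by
    ext w
    cases w with
    | nil => simp
    | cons v w => by_cases hv : v ∈ σ <;> simp [racgRun_cons, hv]
  rw [aCount, Set.ncard_eq_toFinset_card _ (finite_acceptedWords G σ (n + 1)), hwords,
    card_biUnion]
  · refine sum_congr rfl fun v _ => ?_
    rw [card_image_of_injective _ List.cons_injective, aCount,
      Set.ncard_eq_toFinset_card _ (finite_acceptedWords G _ n)]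
  · intro v _ v' _ hvv'
    simp only [disjoint_left, mem_image]
    rintro _ ⟨w, _, rfl⟩ ⟨w', _, h⟩
    exact hvv' (List.cons_eq_cons.1 h).1.symm

theorem aCount_succ_eq_sum_nbrLayer (σ : Finset V) (n : ℕ) :
    aCount G σ (n + 1) = ∑ k ∈ range (#σ + 1),
      ∑ v ∈ nbrLayer G σ k, aCount G (insert v (G.neighborFinset v ∩ σ)) n := by
  rw [aCount_succ]
  exact (sum_fiberwise_of_maps_to (fun v _ => mem_range_succ_iff.2
    (card_le_card inter_subset_right)) _).symm

theorem isClique_insert_neighborFinset_inter {σ : Finset V} (hσ : G.IsClique (σ : Set V))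
    (v : V) : G.IsClique ((insert v (G.neighborFinset v ∩ σ) : Finset V) : Set V) := by
  rw [coe_insert, SimpleGraph.isClique_insert]
  refine ⟨hσ.subset (by simp), fun u hu _ => ?_⟩
  simpa using (mem_inter.1 hu).1

theorem card_insert_of_mem_nbrLayer {σ : Finset V} {k : ℕ} {v : V}
    (hv : v ∈ nbrLayer G σ k) : #(insert v (G.neighborFinset v ∩ σ)) = k + 1 := by
  simp only [nbrLayer, mem_filter, mem_compl] at hv
  rw [card_insert_of_notMem fun h => hv.1 (mem_inter.1 h).2, hv.2]

theorem exists_aCount_eq_of_isClique {ℓ : ℕ → ℤ} (hℓ : HasLinkSizes G ℓ) (n : ℕ) :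
    ∃ c : ℕ → ℤ, ∀ σ : Finset V, G.IsClique (σ : Set V) → (aCount G σ n : ℤ) = c #σ := by
  induction n with
  | zero => exact ⟨fun _ => 1, fun σ hσ => by rw [aCount_zero G hσ, Nat.cast_one]⟩
  | succ n ih =>
    obtain ⟨c, hc⟩ := ih
    refine ⟨fun m => ∑ k ∈ range (m + 1), nbrLayerCard ℓ m k * c (k + 1), fun σ hσ => ?_⟩
    rw [aCount_succ_eq_sum_nbrLayer]
    push_cast
    refine sum_congr rfl fun k _ => ?_
    rw [sum_congr rfl fun v hv => (hc _ (isClique_insert_neighborFinset_inter G hσ v)).trans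
      (congrArg c (card_insert_of_mem_nbrLayer G hv)), sum_const, nsmul_eq_mul,
      card_nbrLayer G hℓ hσ]

theorem aCount_eq_of_card_eq {ℓ : ℕ → ℤ} (hℓ : HasLinkSizes G ℓ) {σ τ : Finset V}
    (hσ : G.IsClique (σ : Set V)) (hτ : G.IsClique (τ : Set V)) (h : #σ = #τ) (n : ℕ) :
    aCount G σ n = aCount G τ n := by
  obtain ⟨c, hc⟩ := exists_aCount_eq_of_isClique G hℓ n
  exact_mod_cast (hc σ hσ).trans ((congrArg c h).trans (hc τ hτ).symm)

end Automaton

section OrderedCliques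

theorem image_univ_cons [DecidableEq V] {m : ℕ} (v : V) (t : Fin m → V) :
    image (Fin.cons v t : Fin (m + 1) → V) univ = insert v (image t univ) := by
  apply coe_injective
  simp [Fin.range_cons]

variable [Fintype V] (G : SimpleGraph V)

@[simp]
theorem mem_orderedCliques {m : ℕ} {t : Fin m → V} :
    t ∈ orderedCliques G m ↔ Function.Injective t ∧ G.IsClique (Set.range t) := by
  simp [orderedCliques]

theorem orderedCliques_zero : orderedCliques G 0 = univ :=
  eq_univ_of_forall fun t => by simp [Function.injective_of_subsingleton]

variable [DecidableEq V]

theorem isClique_image_of_mem_orderedCliques {m : ℕ} {t : Fin m → V}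
    (ht : t ∈ orderedCliques G m) : G.IsClique ((image t univ : Finset V) : Set V) := by
  simpa using ((mem_orderedCliques G).1 ht).2

theorem card_image_of_mem_orderedCliques {m : ℕ} {t : Fin m → V}
    (ht : t ∈ orderedCliques G m) : #(image t univ) = m := by
  rw [card_image_of_injective _ ((mem_orderedCliques G).1 ht).1, card_univ, Fintype.card_fin]

theorem cons_mem_orderedCliques {m : ℕ} {v : V} {t : Fin m → V} :
    (Fin.cons v t : Fin (m + 1) → V) ∈ orderedCliques G (m + 1) ↔
      t ∈ orderedCliques G m ∧ v ∈ lk G (image t univ) := by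
  simp only [mem_orderedCliques, Fin.cons_injective_iff, Fin.range_cons, mem_lk, coe_image,
    coe_univ, Set.image_univ, mem_image, mem_univ, true_and, Set.mem_range]
  constructor
  · rintro ⟨⟨hv, ht⟩, hcl⟩
    exact ⟨⟨ht, hcl.subset (Set.subset_insert _ _)⟩, hv, hcl⟩
  · rintro ⟨⟨ht, -⟩, hv, hcl⟩
    exact ⟨⟨hv, ht⟩, hcl⟩

theorem sum_orderedCliques_succ {M : Type*} [AddCommMonoid M] (m : ℕ) (f : Finset V → M) :
    ∑ t ∈ orderedCliques G (m + 1), f (image t univ) =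
      ∑ t ∈ orderedCliques G m, ∑ v ∈ lk G (image t univ), f (insert v (image t univ)) := by
  rw [sum_sigma']
  refine sum_nbij' (fun t => ⟨Fin.tail t, t 0⟩) (fun x => Fin.cons x.2 x.1) ?_ ?_ ?_ ?_ ?_
  · intro t ht
    rw [← Fin.cons_self_tail t, cons_mem_orderedCliques] at ht
    simpa using ht
  · rintro ⟨t, v⟩ hx
    rw [mem_sigma] at hx
    exact (cons_mem_orderedCliques G).2 hx
  · intro t _
    exact Fin.cons_self_tail t
  · rintro ⟨t, v⟩ _
    simp
  · intro t _
    conv_lhs => rw [← Fin.cons_self_tail t]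
    rw [image_univ_cons]

theorem card_orderedCliques {ℓ : ℕ → ℤ} (hℓ : HasLinkSizes G ℓ) (m : ℕ) :
    (#(orderedCliques G m) : ℤ) = ∏ j ∈ range m, ℓ j := by
  induction m with
  | zero => simp [orderedCliques_zero]
  | succ m ih =>
    rw [card_eq_sum_ones, Nat.cast_sum, sum_orderedCliques_succ G m fun _ => ((1 : ℕ) : ℤ),
      prod_range_succ, ← ih, card_eq_sum_ones, Nat.cast_sum, sum_mul]
    refine sum_congr rfl fun t ht => ?_
    rw [sum_const, nsmul_eq_mul, hℓ _ (isClique_image_of_mem_orderedCliques G ht),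
      card_image_of_mem_orderedCliques G ht, Nat.cast_one, mul_one, one_mul]

end OrderedCliques

section GrowthFunctions

variable [Fintype V] [DecidableEq V] (G : SimpleGraph V) [DecidableRel G.Adj]

theorem gfun_zero_zero : gfun G 0 0 = 1 := by
  rw [gfun, if_pos rfl, aCount_zero G (by simp), Nat.cast_one]

theorem gfun_zero_succ (n : ℕ) : gfun G 0 (n + 1) = gfun G 1 n := by
  rw [gfun, gfun, if_pos rfl, if_neg one_ne_zero, aCount_succ]
  refine Eq.trans ?_ (sum_orderedCliques_succ G 0 fun σ => (aCount G σ n : ℤ)).symm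
  simp [orderedCliques_zero, lk_empty]

theorem gfun_of_ne_zero {m : ℕ} (hm : m ≠ 0) (n : ℕ) :
    gfun G m n = ∑ t ∈ orderedCliques G m, (aCount G (image t univ) n : ℤ) := by
  rw [gfun, if_neg hm]

theorem sum_orderedCliques_nbrLayer_self (m n : ℕ) :
    ∑ t ∈ orderedCliques G m, ∑ v ∈ nbrLayer G (image t univ) m,
        (aCount G (insert v (G.neighborFinset v ∩ image t univ)) n : ℤ) =
      gfun G (m + 1) n := by
  rw [gfun_of_ne_zero G m.succ_ne_zero, sum_orderedCliques_succ G m fun σ => (aCount G σ n : ℤ)]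
  refine sum_congr rfl fun t ht => ?_
  have ht' := isClique_image_of_mem_orderedCliques G ht
  have hlk := nbrLayer_card_eq_lk G ht'
  rw [card_image_of_mem_orderedCliques G ht] at hlk
  rw [hlk]
  refine sum_congr rfl fun v hv => ?_
  rw [inter_eq_right.2 ((mem_lk_iff_subset_neighborFinset G ht').1 hv).2]

theorem mk_gfun_zero :
    PowerSeries.mk (gfun G 0) = 1 + PowerSeries.X * PowerSeries.mk (gfun G 1) := by
  rw [PowerSeries.mk_eq_C_add_X_mul, gfun_zero_zero, map_one]
  simp only [gfun_zero_succ]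

variable {G}

theorem gfun_eq_card_mul_aCount {ℓ : ℕ → ℤ} (hℓ : HasLinkSizes G ℓ) {m : ℕ} (hm : m ≠ 0)
    {τ : Finset V} (hτ : G.IsClique (τ : Set V)) (hτm : #τ = m) (n : ℕ) :
    gfun G m n = #(orderedCliques G m) * aCount G τ n := by
  rw [gfun_of_ne_zero G hm, card_eq_sum_ones, Nat.cast_sum, sum_mul]
  refine sum_congr rfl fun t ht => ?_
  rw [aCount_eq_of_card_eq G hℓ (isClique_image_of_mem_orderedCliques G ht) hτ
    ((card_image_of_mem_orderedCliques G ht).trans hτm.symm), Nat.cast_one, one_mul]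

theorem gfun_zero_of_ne_zero {ℓ : ℕ → ℤ} (hℓ : HasLinkSizes G ℓ) {m : ℕ} (hm : m ≠ 0) :
    gfun G m 0 = ∏ j ∈ range m, ℓ j := by
  rw [gfun_of_ne_zero G hm, ← card_orderedCliques G hℓ, card_eq_sum_ones, Nat.cast_sum]
  refine sum_congr rfl fun t ht => ?_
  rw [aCount_zero G (isClique_image_of_mem_orderedCliques G ht)]

theorem sum_orderedCliques_nbrLayer_of_lt {ℓ : ℕ → ℤ} (hℓ : HasLinkSizes G ℓ) {m k : ℕ}
    (hkm : k < m) (hcl : ∃ σ : Finset V, G.IsClique (σ : Set V) ∧ #σ = m) (n : ℕ) :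
    ∑ t ∈ orderedCliques G m, ∑ v ∈ nbrLayer G (image t univ) k,
        (aCount G (insert v (G.neighborFinset v ∩ image t univ)) n : ℤ) =
      m.choose k * Nmk ℓ m k * gfun G (k + 1) n := by
  obtain ⟨σ, hσ, hσm⟩ := hcl
  obtain ⟨τ, hτσ, hτk⟩ := exists_subset_card_eq (show k + 1 ≤ #σ by omega)
  have hτ : G.IsClique (τ : Set V) := hσ.subset (by exact_mod_cast hτσ)
  have hlayer : ∀ t ∈ orderedCliques G m, ∑ v ∈ nbrLayer G (image t univ) k,
      (aCount G (insert v (G.neighborFinset v ∩ image t univ)) n : ℤ) =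
        nbrLayerCard ℓ m k * aCount G τ n := by
    intro t ht
    have ht' := isClique_image_of_mem_orderedCliques G ht
    have hcard := card_nbrLayer G hℓ ht' k
    rw [card_image_of_mem_orderedCliques G ht] at hcard
    rw [← hcard, ← nsmul_eq_mul, ← sum_const]
    refine sum_congr rfl fun v hv => ?_
    rw [aCount_eq_of_card_eq G hℓ (isClique_insert_neighborFinset_inter G ht' v) hτ
      ((card_insert_of_mem_nbrLayer G hv).trans hτk.symm)]
  rw [sum_congr rfl hlayer, sum_const, nsmul_eq_mul, card_orderedCliques G hℓ, ← mul_assoc,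
    prod_mul_nbrLayerCard ℓ hkm, gfun_eq_card_mul_aCount hℓ k.succ_ne_zero hτ hτk,
    card_orderedCliques G hℓ]
  ring

theorem gfun_succ {ℓ : ℕ → ℤ} (hℓ : HasLinkSizes G ℓ) {m : ℕ} (hm : m ≠ 0)
    (hcl : ∃ σ : Finset V, G.IsClique (σ : Set V) ∧ #σ = m) (n : ℕ) :
    gfun G m (n + 1) =
      gfun G (m + 1) n + ∑ k ∈ range m, m.choose k * Nmk ℓ m k * gfun G (k + 1) n := by
  have hsplit : ∀ t ∈ orderedCliques G m, (aCount G (image t univ) (n + 1) : ℤ) =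
      ∑ k ∈ range (m + 1), ∑ v ∈ nbrLayer G (image t univ) k,
        (aCount G (insert v (G.neighborFinset v ∩ image t univ)) n : ℤ) := by
    intro t ht
    rw [aCount_succ_eq_sum_nbrLayer, card_image_of_mem_orderedCliques G ht]
    push_cast
    rfl
  rw [gfun_of_ne_zero G hm, sum_congr rfl hsplit, sum_comm, sum_range_succ,
    sum_orderedCliques_nbrLayer_self, add_comm]
  congr 1
  exact sum_congr rfl fun k hk => sum_orderedCliques_nbrLayer_of_lt hℓ (mem_range.1 hk) hcl n

theorem mk_gfun_of_ne_zero {ℓ : ℕ → ℤ} (hℓ : HasLinkSizes G ℓ) {m : ℕ} (hm : m ≠ 0)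
    (hcl : ∃ σ : Finset V, G.IsClique (σ : Set V) ∧ #σ = m) :
    PowerSeries.mk (gfun G m) = PowerSeries.C (∏ j ∈ range m, ℓ j) +
      PowerSeries.X * (PowerSeries.mk (gfun G (m + 1)) + ∑ k ∈ range m,
        PowerSeries.C (m.choose k * Nmk ℓ m k) * PowerSeries.mk (gfun G (k + 1))) := by
  rw [PowerSeries.mk_eq_C_add_X_mul, gfun_zero_of_ne_zero hℓ hm]
  congr 2
  ext n
  simp only [gfun_succ hℓ hm hcl, map_add, map_sum, PowerSeries.coeff_C_mul, PowerSeries.coeff_mk]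

end GrowthFunctions

theorem stmt15_general [Fintype V] [DecidableEq V] (G : SimpleGraph V) [DecidableRel G.Adj]
    (d : ℕ)
    (hmax : ∀ σ : Finset V, G.IsClique (σ : Set V) → σ.card ≤ d)
    (hmax' : ∃ σ : Finset V, G.IsClique (σ : Set V) ∧ σ.card = d)
    (ℓ : ℕ → ℤ) (hℓ0 : ℓ 0 = Fintype.card V)
    (hℓ : ∀ k, 1 ≤ k → k ≤ d → ∀ σ : Finset V, G.IsClique (σ : Set V) → σ.card = k →
      ℓ k = ((lk G σ).card : ℤ))
    (a : ℕ → ℤ)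
    (ha : ∀ m, 1 ≤ m → m ≤ d → a m = ∏ j ∈ Finset.range m, ℓ j)
    (b : ℕ → ℕ → ℤ) (hb : ∀ m k, b m k = (m.choose k : ℤ) * Nmk ℓ m k)
    (p q : ℕ → Polynomial ℤ)
    (hp1 : p 1 = 1) (hq1 : q 1 = 1)
    (hp : ∀ m, 1 ≤ m → m ≤ d → p (m + 1) =
      p m - ∑ k ∈ Finset.range m, Polynomial.C (b m k) * Polynomial.X ^ (m - k) * p (k + 1))
    (hq : ∀ m, 1 ≤ m → m ≤ d → q (m + 1) =
      q m + Polynomial.C (a m) * Polynomial.X ^ m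
        - ∑ k ∈ Finset.range m, Polynomial.C (b m k) * Polynomial.X ^ (m - k) * q (k + 1)) :
    ∀ m, 1 ≤ m → m ≤ d + 1 →
      (PowerSeries.X : PowerSeries ℤ) ^ m * PowerSeries.mk (fun n => gfun G m n) =
        (p m : PowerSeries ℤ) * PowerSeries.mk (fun n => gfun G 0 n)
          - (q m : PowerSeries ℤ) := by
  have hsizes := hasLinkSizes_of_le G hmax hℓ0 hℓ
  have hcl : ∀ m ≤ d, ∃ σ : Finset V, G.IsClique (σ : Set V) ∧ #σ = m := by
    obtain ⟨σ, hσ, rfl⟩ := hmax'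
    intro m hm
    obtain ⟨τ, hτσ, hτ⟩ := exists_subset_card_eq hm
    exact ⟨τ, hσ.subset (by exact_mod_cast hτσ), hτ⟩
  refine pow_mul_eq_of_recurrence PowerSeries.X d (fun m => PowerSeries.C (a m))
    (fun m k => PowerSeries.C (b m k)) (fun m => PowerSeries.mk (gfun G m))
    (fun m => Polynomial.coeToPowerSeries.ringHom (p m))
    (fun m => Polynomial.coeToPowerSeries.ringHom (q m)) (mk_gfun_zero G)
    (fun m hm hmd => ?_) (by simp [hp1]) (by simp [hq1]) (fun m hm hmd => ?_) (fun m hm hmd => ?_)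
  · simp only [ha m hm hmd, hb]
    exact mk_gfun_of_ne_zero hsizes (by omega) (hcl m hmd)
  · simp only [hp m hm hmd, map_sub, map_sum, map_mul, map_pow,
      Polynomial.coeToPowerSeries.ringHom_apply, Polynomial.coe_C, Polynomial.coe_X]
  · simp only [hq m hm hmd, map_sub, map_add, map_sum, map_mul, map_pow,
      Polynomial.coeToPowerSeries.ringHom_apply, Polynomial.coe_C, Polynomial.coe_X]

theorem stmt15 [Fintype V] [DecidableEq V] (G : SimpleGraph V) [DecidableRel G.Adj]
    (d : ℕ) (hLR : LinkRegularS G)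
    (hmax : ∀ σ : Finset V, G.IsClique (σ : Set V) → σ.card ≤ d)
    (hmax' : ∃ σ : Finset V, G.IsClique (σ : Set V) ∧ σ.card = d)
    (ℓ : ℕ → ℤ) (hℓ0 : ℓ 0 = Fintype.card V)
    (hℓ : ∀ k, 1 ≤ k → k ≤ d → ∀ σ : Finset V, G.IsClique (σ : Set V) → σ.card = k →
      ℓ k = ((lk G σ).card : ℤ))
    (a : ℕ → ℤ) (ha0 : a 0 = 1)
    (ha : ∀ m, 1 ≤ m → m ≤ d → a m = ∏ j ∈ Finset.range m, ℓ j)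
    (b : ℕ → ℕ → ℤ) (hb : ∀ m k, b m k = (m.choose k : ℤ) * Nmk ℓ m k)
    (p q : ℕ → Polynomial ℤ)
    (hp1 : p 1 = 1) (hq1 : q 1 = 1)
    (hp : ∀ m, 1 ≤ m → m ≤ d → p (m + 1) =
      p m - ∑ k ∈ Finset.range m, Polynomial.C (b m k) * Polynomial.X ^ (m - k) * p (k + 1))
    (hq : ∀ m, 1 ≤ m → m ≤ d → q (m + 1) =
      q m + Polynomial.C (a m) * Polynomial.X ^ m
        - ∑ k ∈ Finset.range m, Polynomial.C (b m k) * Polynomial.X ^ (m - k) * q (k + 1)) :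
    ∀ m, 1 ≤ m → m ≤ d + 1 →
      (PowerSeries.X : PowerSeries ℤ) ^ m * PowerSeries.mk (fun n => gfun G m n) =
        (p m : PowerSeries ℤ) * PowerSeries.mk (fun n => gfun G 0 n)
          - (q m : PowerSeries ℤ) :=
  stmt15_general G d hmax hmax' ℓ hℓ0 hℓ a ha b hb p q hp1 hq1 hp hq
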